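/- Let f be an entire function of exponential type, i.e. there exist constants C, K > 0 with |D^n f(0)| ≤ C·K^n for all n ∈ ℕ. Then there exists a neighborhood A of 0 in ℂ (one may take A = {x : e·K·|x|·exp(K|x|) ≤ 1}) such that for all x ∈ A and all λ ∈ ℂ: f(λx) = f(0) + λ · Σ_{p=1}^{∞} (λ - p)^{p-1} · (x^p/p!) · D^p f(px), the series being absolutely convergent. -/

import Mathlib

/-!
Expanding each `D^{p+1} f((p+1)x)` in its Taylor series at `0` turns the series into a double
series indexed by `(p, n)`. On `A` this double series converges absolutely: by the growth bound
and Stirling's formula its `p`-th row is `O(p^{-3/2})`, and this is exactly where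
`e K |x| exp (K |x|) ≤ 1` is needed. Summed along the antidiagonals `p + n = m` instead, Abel's
identity `∑_{k=1}^{m} C(m,k) λ (λ - k)^{k-1} k^{m-k} = λ^m` collapses the `m`-th antidiagonal
to the Taylor term `(λx)^m D^m f(0) / m!`, so the sum is `f(λx) - f(0)`.
-/

open scoped Nat
open Finset

theorem sum_range_neg_one_pow_mul_choose_mul_add_pow {R : Type*} [CommRing R] {j n : ℕ}
    (h : j < n) (a : R) :
    ∑ k ∈ range (n + 1), (-1 : R) ^ k * n.choose k * (k + a) ^ j = 0 := by
  have hΔ := congrFun (fwdDiff_iter_pow_eq_zero_of_lt (R := R) h) a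
  rw [fwdDiff_iter_eq_sum_shift, Pi.zero_apply] at hΔ
  calc ∑ k ∈ range (n + 1), (-1 : R) ^ k * n.choose k * (k + a) ^ j
      = (-1) ^ n *
          ∑ k ∈ range (n + 1), ((-1 : ℤ) ^ (n - k) * n.choose k) • (a + k • 1) ^ j := by
        rw [mul_sum]
        refine sum_congr rfl fun k hk => ?_
        have hsign : (-1 : R) ^ n = (-1) ^ k * (-1) ^ (n - k) := by
          rw [← pow_add, Nat.add_sub_cancel' (Nat.lt_succ_iff.mp (mem_range.mp hk))]
        have hsq : ((-1 : R) ^ (n - k)) ^ 2 = 1 := by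
          rw [← pow_mul, pow_mul', neg_one_sq, one_pow]
        rw [hsign, zsmul_eq_mul, nsmul_one, add_comm a]
        push_cast
        linear_combination (-(n.choose k : R) * (-1) ^ k * (k + a) ^ j) * hsq
    _ = 0 := by rw [hΔ, mul_zero]

section AbelIdentity

open Polynomial

variable {R : Type*} [CommRing R]

-- `∑_{k=1}^{n} C(n,k) a (a - k)^(k-1) (X + k)^(n-k)`, indexed by `q = k - 1`.
noncomputable def abelSum (n : ℕ) (a : R) : R[X] :=
  ∑ q ∈ range n,
    C (n.choose (q + 1) * a * (a - (q + 1)) ^ q) * (X + C ((q : R) + 1)) ^ (n - (q + 1))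

theorem derivative_abelSum (n : ℕ) (a : R) :
    derivative (abelSum (n + 1) a) = C ((n : R) + 1) * abelSum n a := by
  unfold abelSum
  rw [derivative_sum, Finset.sum_range_succ, Finset.mul_sum]
  simp only [derivative_C_mul, derivative_pow, derivative_add, derivative_X, derivative_C,
    mul_one, Nat.sub_self, Nat.cast_zero, map_zero, zero_mul, mul_zero, add_zero]
  refine Finset.sum_congr rfl fun q hq => ?_
  have hchoose : ((n + 1).choose (q + 1) : R) * ((n + 1 - (q + 1) : ℕ) : R) =
      ((n : R) + 1) * n.choose (q + 1) := by
    have h := congrArg (Nat.cast : ℕ → R)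
      ((Nat.choose_mul_succ_eq n (q + 1)).symm.trans (mul_comm _ _))
    rwa [Nat.cast_mul, Nat.cast_mul, Nat.cast_succ] at h
  rw [show n + 1 - (q + 1) - 1 = n - (q + 1) by omega, ← mul_assoc, ← mul_assoc, ← C_mul,
    ← C_mul]
  congr 2
  linear_combination (a * (a - (q + 1)) ^ q) * hchoose

theorem eval_neg_abelSum (n : ℕ) (a : R) :
    (abelSum (n + 1) a).eval (-a) = -(-a) ^ (n + 1) := by
  have halt := sum_range_neg_one_pow_mul_choose_mul_add_pow (Nat.lt_succ_self n) (-a)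
  rw [sum_range_succ'] at halt
  simp only [abelSum, eval_finsetSum, eval_mul, eval_C, eval_pow, eval_add, eval_X]
  have hterm : ∀ q ∈ range (n + 1),
      ((n + 1).choose (q + 1) : R) * a * (a - (q + 1)) ^ q *
          (-a + (q + 1)) ^ (n + 1 - (q + 1)) =
        -a * ((-1) ^ (q + 1) * (n + 1).choose (q + 1) * (((q + 1 : ℕ) : R) + -a) ^ n) := by
    intro q hq
    have hpow : (-a + (q + 1)) ^ q * (-a + (q + 1)) ^ (n - q) = (-a + (q + 1)) ^ n := by
      rw [← pow_add]; congr 1; have := mem_range.mp hq; omega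
    rw [Nat.add_sub_add_right, show a - (q + 1) = -1 * (-a + (q + 1)) by ring, mul_pow]
    push_cast
    linear_combination ((n + 1).choose (q + 1) : R) * a * (-1) ^ q * hpow
  rw [Finset.sum_congr rfl hterm, ← Finset.mul_sum]
  simp only [pow_zero, Nat.choose_zero_right, Nat.cast_one, Nat.cast_zero, zero_add,
    one_mul] at halt
  linear_combination -a * halt

theorem X_pow_add_abelSum [IsAddTorsionFree R] (n : ℕ) (a : R) :
    X ^ n + abelSum n a = (C a + X) ^ n := by
  -- Both sides have the same derivative by induction, and they agree at `-a` because `n`-th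
  -- finite differences kill polynomials of degree `< n`.
  induction n with
  | zero => simp [abelSum]
  | succ n ih =>
    set P : R[X] := X ^ (n + 1) + abelSum (n + 1) a - (C a + X) ^ (n + 1) with hP
    have hderiv : derivative P = 0 := by
      simp only [hP, derivative_sub, derivative_abelSum, derivative_pow, derivative_C,
        derivative_X, zero_add, mul_one, Nat.cast_succ, map_add, map_natCast, map_one,
        Nat.add_sub_cancel]
      linear_combination ((n : R[X]) + 1) * ih
    have hconst : P = C (P.coeff 0) := eq_C_of_derivative_eq_zero hderiv
    have hzero : P.coeff 0 = 0 := by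
      rw [← eval_C (a := P.coeff 0) (x := -a), ← hconst]
      simp only [hP, eval_sub, eval_add, eval_neg_abelSum, eval_pow, eval_X, eval_C]
      ring
    rw [← sub_eq_zero, ← hP, hconst, hzero, map_zero]

theorem eval_zero_abelSum [IsAddTorsionFree R] (n : ℕ) (a : R) :
    (abelSum (n + 1) a).eval 0 = a ^ (n + 1) := by
  simpa using congrArg (eval 0) (X_pow_add_abelSum (n + 1) a)

end AbelIdentity

theorem Summable.hasSum_of_hasSum_sum_antidiagonal {α A : Type*} [AddCommMonoid α]
    [TopologicalSpace α] [ContinuousAdd α] [T3Space α] [AddCommMonoid A] [HasAntidiagonal A]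
    {F : A × A → α} {T : A → α} {S : α} (hF : Summable F)
    (hrow : ∀ p, HasSum (fun n => F (p, n)) (T p))
    (hdiag : HasSum (fun m => ∑ i ∈ antidiagonal m, F i) S) : HasSum T S := by
  obtain ⟨S', hS'⟩ := hF
  have hsigma : HasSum (fun m => ∑ i ∈ antidiagonal m, F i) S' := by
    refine ((HasAntidiagonal.sigmaAntidiagonalEquivProd (A := A)).hasSum_iff.mpr hS').sigma
      fun m => ?_
    have hfin := hasSum_fintype fun i : antidiagonal m => F i
    rwa [Finset.sum_coe_sort] at hfin
  rw [hdiag.unique hsigma]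
  exact hS'.prod_fiberwise hrow

theorem Summable.norm_of_hasSum_row {E A B : Type*} [SeminormedAddCommGroup E]
    {F : A × B → E} {T : A → E} (hF : Summable fun i => ‖F i‖)
    (hrow : ∀ p, HasSum (fun n => F (p, n)) (T p)) : Summable fun p => ‖T p‖ :=
  hF.prod.of_nonneg_of_le (fun _ => norm_nonneg _) fun p =>
    (hrow p).norm_le_of_bounded (hF.prod_factor p).hasSum fun _ => le_rfl

theorem Differentiable.hasSum_iteratedDeriv {E : Type*} [NormedAddCommGroup E] [NormedSpace ℂ E]
    [CompleteSpace E] {f : ℂ → E} (hf : Differentiable ℂ f) (q : ℕ) (c z : ℂ) :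
    HasSum (fun n : ℕ => (n ! : ℂ)⁻¹ • (z - c) ^ n • iteratedDeriv (n + q) f c)
      (iteratedDeriv q f z) := by
  have hq : Differentiable ℂ (iteratedDeriv q f) :=
    hf.contDiff.differentiable_iteratedDeriv' q
  simpa only [iteratedDeriv_eq_iterate, ← Function.iterate_add_apply] using
    Complex.hasSum_taylorSeries_of_entire hq c z

theorem Real.hasSum_pow_div_factorial (t : ℝ) :
    HasSum (fun n : ℕ => t ^ n / n !) (Real.exp t) := by
  rw [Real.exp_eq_exp_ℝ]
  exact NormedSpace.expSeries_div_hasSum_exp t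

theorem sqrt_mul_pow_le_factorial {r : ℝ} (hr : 0 ≤ r) (her : Real.exp 1 * r ≤ 1) (m : ℕ) :
    √m * (m * r) ^ m ≤ m ! := by
  have hr' : r ≤ 1 / Real.exp 1 := by rw [le_div_iff₀ (Real.exp_pos 1)]; linarith
  calc √m * (m * r) ^ m ≤ √(2 * Real.pi * m) * (m / Real.exp 1) ^ m := by
        gcongr
        · nlinarith [Real.pi_gt_three, (Nat.cast_nonneg m : (0 : ℝ) ≤ m)]
        · rw [div_eq_mul_one_div]; gcongr
    _ ≤ m ! := Stirling.le_factorial_stirling m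

theorem add_pow_le_pow_mul_exp {a b : ℝ} (ha : 0 ≤ a) {n : ℕ} (hb : (n : ℝ) ≤ b)
    (hb0 : 0 < b) :
    (a + b) ^ n ≤ b ^ n * Real.exp a := by
  calc (a + b) ^ n = b ^ n * (a / b + 1) ^ n := by
        rw [← mul_pow]; congr 1; field_simp
    _ ≤ b ^ n * Real.exp (a / b) ^ n := by gcongr; exact Real.add_one_le_exp _
    _ = b ^ n * Real.exp (n * (a / b)) := by rw [← Real.exp_nat_mul]
    _ ≤ b ^ n * Real.exp a := by
        gcongr
        rw [← mul_div_assoc, div_le_iff₀ hb0]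
        nlinarith

noncomputable def abelCoeff (lam x : ℂ) (p : ℕ) : ℂ :=
  lam * (lam - ((p : ℂ) + 1)) ^ p * (x ^ (p + 1) / ((p + 1)! : ℂ))

theorem abelCoeff_mul_eq (lam x : ℂ) {k m : ℕ} (hkm : k ≤ m) :
    abelCoeff lam x k * (((m - k)! : ℂ)⁻¹ * (((k : ℂ) + 1) * x) ^ (m - k)) =
      ((m + 1)! : ℂ)⁻¹ * x ^ (m + 1) *
        ((m + 1).choose (k + 1) * lam * (lam - (k + 1)) ^ k *
          (0 + ((k : ℂ) + 1)) ^ (m + 1 - (k + 1))) := by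
  have hfac : ((m + 1).choose (k + 1) : ℂ) * (k + 1)! * (m - k)! = (m + 1)! := by
    have h := Nat.choose_mul_factorial_mul_factorial (show k + 1 ≤ m + 1 by omega)
    rw [show m + 1 - (k + 1) = m - k by omega] at h
    exact_mod_cast h
  have hx : x ^ (k + 1) * x ^ (m - k) = x ^ (m + 1) := by rw [← pow_add]; congr 1; omega
  have hchoose : ((m + 1).choose (k + 1) : ℂ) ≠ 0 :=
    Nat.cast_ne_zero.mpr (Nat.choose_pos (by omega)).ne'
  rw [abelCoeff, Nat.add_sub_add_right, zero_add, ← hfac, ← hx, mul_pow]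
  field_simp

theorem sum_antidiagonal_abelCoeff_mul (lam x : ℂ) (m : ℕ) :
    ∑ i ∈ antidiagonal m,
        abelCoeff lam x i.1 * ((i.2 ! : ℂ)⁻¹ * (((i.1 : ℂ) + 1) * x) ^ i.2) =
      ((m + 1)! : ℂ)⁻¹ * (lam * x) ^ (m + 1) := by
  rw [Nat.sum_antidiagonal_eq_sum_range_succ_mk,
    Finset.sum_congr rfl fun k hk =>
      abelCoeff_mul_eq lam x (Nat.lt_succ_iff.mp (mem_range.mp hk)),
    ← Finset.mul_sum, mul_pow, ← eval_zero_abelSum m lam]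
  simp only [abelSum, Polynomial.eval_finsetSum, Polynomial.eval_mul, Polynomial.eval_C,
    Polynomial.eval_pow, Polynomial.eval_add, Polynomial.eval_X]
  ring

theorem norm_abelCoeff_le (lam x : ℂ) (p : ℕ) :
    ‖abelCoeff lam x p‖ ≤
      ‖lam‖ * Real.exp ‖lam‖ * ((p + 1 : ℝ) ^ p * ‖x‖ ^ (p + 1) / (p + 1)!) := by
  have hp : ‖(p : ℂ) + 1‖ = p + 1 := by exact_mod_cast Complex.norm_natCast (p + 1)
  have hsub : ‖lam - ((p : ℂ) + 1)‖ ≤ ‖lam‖ + (p + 1) :=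
    (norm_sub_le _ _).trans_eq (by rw [hp])
  have hpow := add_pow_le_pow_mul_exp (norm_nonneg lam) (n := p) (b := p + 1) (by linarith)
    (by positivity)
  rw [abelCoeff, norm_mul, norm_mul, norm_pow, norm_div, norm_pow, Complex.norm_natCast]
  calc ‖lam‖ * ‖lam - ((p : ℂ) + 1)‖ ^ p * (‖x‖ ^ (p + 1) / (p + 1)!)
      ≤ ‖lam‖ * (((p : ℝ) + 1) ^ p * Real.exp ‖lam‖) *
          (‖x‖ ^ (p + 1) / (p + 1)!) := by
        gcongr; exact (pow_le_pow_left₀ (norm_nonneg _) hsub p).trans hpow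
    _ = _ := by ring

theorem norm_abelCoeff_mul_le {lam x : ℂ} {C K : ℝ} (hC : 0 ≤ C) (hK : 0 ≤ K)
    (hx : Real.exp 1 * K * ‖x‖ * Real.exp (K * ‖x‖) ≤ 1) (p : ℕ) :
    ‖abelCoeff lam x p‖ * (C * K ^ (p + 1) * Real.exp (K * ‖((p : ℂ) + 1) * x‖)) ≤
      C * ‖lam‖ * Real.exp ‖lam‖ / ((p + 1) * √(p + 1)) := by
  set r := K * ‖x‖ * Real.exp (K * ‖x‖) with hr
  have hstirling :=
    sqrt_mul_pow_le_factorial (r := r) (by positivity) (by rw [hr]; linarith) (p + 1)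
  have hnorm : ‖((p : ℂ) + 1) * x‖ = (p + 1) * ‖x‖ := by
    rw [norm_mul, show ‖(p : ℂ) + 1‖ = p + 1 by exact_mod_cast Complex.norm_natCast (p + 1)]
  have hexp : Real.exp (K * ‖((p : ℂ) + 1) * x‖) = Real.exp (K * ‖x‖) ^ (p + 1) := by
    rw [hnorm, ← Real.exp_nat_mul]; push_cast; ring_nf
  push_cast at hstirling
  calc ‖abelCoeff lam x p‖ * (C * K ^ (p + 1) * Real.exp (K * ‖((p : ℂ) + 1) * x‖))
      ≤ ‖lam‖ * Real.exp ‖lam‖ * ((p + 1 : ℝ) ^ p * ‖x‖ ^ (p + 1) / (p + 1)!) *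
          (C * K ^ (p + 1) * Real.exp (K * ‖((p : ℂ) + 1) * x‖)) := by
        gcongr; exact norm_abelCoeff_le lam x p
    _ = C * ‖lam‖ * Real.exp ‖lam‖ * (((p + 1) * r) ^ (p + 1) / ((p + 1) * (p + 1)!)) := by
        rw [hexp, hr, mul_pow, mul_pow, mul_pow, pow_succ ((p : ℝ) + 1) p]; field_simp
    _ ≤ C * ‖lam‖ * Real.exp ‖lam‖ / ((p + 1) * √(p + 1)) := by
        rw [div_eq_mul_one_div (C * ‖lam‖ * Real.exp ‖lam‖)]
        refine mul_le_mul_of_nonneg_left ?_ (by positivity)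
        rw [div_le_div_iff₀ (by positivity) (by positivity), one_mul]
        nlinarith [mul_le_mul_of_nonneg_left hstirling (by positivity : (0 : ℝ) ≤ p + 1)]

theorem norm_taylorTerm_le {f : ℂ → ℂ} {C K : ℝ}
    (hgrowth : ∀ n : ℕ, ‖iteratedDeriv n f 0‖ ≤ C * K ^ n) (q n : ℕ) (w : ℂ) :
    ‖(n ! : ℂ)⁻¹ * w ^ n * iteratedDeriv (n + q) f 0‖ ≤
      C * K ^ q * ((K * ‖w‖) ^ n / n !) := by
  rw [norm_mul, norm_mul, norm_inv, norm_pow, Complex.norm_natCast]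
  calc (n ! : ℝ)⁻¹ * ‖w‖ ^ n * ‖iteratedDeriv (n + q) f 0‖
      ≤ (n ! : ℝ)⁻¹ * ‖w‖ ^ n * (C * K ^ (n + q)) := by gcongr; exact hgrowth (n + q)
    _ = C * K ^ q * ((K * ‖w‖) ^ n / n !) := by ring

noncomputable def abelDoubleSeries (f : ℂ → ℂ) (lam x : ℂ) (i : ℕ × ℕ) : ℂ :=
  abelCoeff lam x i.1 *
    ((i.2 ! : ℂ)⁻¹ * (((i.1 : ℂ) + 1) * x) ^ i.2 * iteratedDeriv (i.2 + (i.1 + 1)) f 0)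

theorem hasSum_abelDoubleSeries_row {f : ℂ → ℂ} (hf : Differentiable ℂ f) (lam x : ℂ)
    (p : ℕ) :
    HasSum (fun n => abelDoubleSeries f lam x (p, n))
      (abelCoeff lam x p * iteratedDeriv (p + 1) f (((p : ℂ) + 1) * x)) := by
  have h := hf.hasSum_iteratedDeriv (p + 1) 0 (((p : ℂ) + 1) * x)
  simp only [sub_zero, smul_eq_mul, ← mul_assoc] at h
  exact h.mul_left (abelCoeff lam x p)

theorem hasSum_sum_antidiagonal_abelDoubleSeries {f : ℂ → ℂ} (hf : Differentiable ℂ f)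
    (lam x : ℂ) :
    HasSum (fun m => ∑ i ∈ antidiagonal m, abelDoubleSeries f lam x i) (f (lam * x) - f 0) := by
  have hdiag : ∀ m, ∑ i ∈ antidiagonal m, abelDoubleSeries f lam x i =
      ((m + 1)! : ℂ)⁻¹ * (lam * x) ^ (m + 1) * iteratedDeriv (m + 1) f 0 := by
    intro m
    rw [← sum_antidiagonal_abelCoeff_mul, Finset.sum_mul]
    refine Finset.sum_congr rfl fun i hi => ?_
    rw [HasAntidiagonal.mem_antidiagonal] at hi
    rw [abelDoubleSeries, show i.2 + (i.1 + 1) = m + 1 by omega]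
    ring
  have htaylor := hf.hasSum_iteratedDeriv 0 0 (lam * x)
  simp only [sub_zero, smul_eq_mul, add_zero, iteratedDeriv_zero, ← mul_assoc] at htaylor
  simpa [hdiag] using (hasSum_nat_add_iff' 1).mpr htaylor

theorem summable_inv_succ_mul_sqrt : Summable fun p : ℕ => ((p + 1 : ℝ) * √(p + 1))⁻¹ := by
  have h := (summable_nat_add_iff 1).mpr
    (Real.summable_nat_rpow_inv.mpr (by norm_num : (1 : ℝ) < 3 / 2))
  refine h.congr fun p => ?_
  push_cast
  rw [show (3 : ℝ) / 2 = 1 + 1 / 2 by norm_num, Real.rpow_add (by positivity), Real.rpow_one,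
    ← Real.sqrt_eq_rpow]

theorem summable_norm_abelDoubleSeries {f : ℂ → ℂ} {C K : ℝ} (hK : 0 ≤ K)
    (hgrowth : ∀ n : ℕ, ‖iteratedDeriv n f 0‖ ≤ C * K ^ n) {x : ℂ}
    (hx : Real.exp 1 * K * ‖x‖ * Real.exp (K * ‖x‖) ≤ 1) (lam : ℂ) :
    Summable fun i => ‖abelDoubleSeries f lam x i‖ := by
  have hC : 0 ≤ C := by simpa using (norm_nonneg _).trans (hgrowth 0)
  set bound : ℕ → ℕ → ℝ := fun p n =>
    ‖abelCoeff lam x p‖ * (C * K ^ (p + 1) * ((K * ‖((p : ℂ) + 1) * x‖) ^ n / n !))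
  have hterm : ∀ p n, ‖abelDoubleSeries f lam x (p, n)‖ ≤ bound p n := fun p n => by
    rw [abelDoubleSeries, norm_mul]
    exact mul_le_mul_of_nonneg_left (norm_taylorTerm_le hgrowth (p + 1) n _) (norm_nonneg _)
  have hbound : ∀ p, HasSum (bound p)
      (‖abelCoeff lam x p‖ * (C * K ^ (p + 1) * Real.exp (K * ‖((p : ℂ) + 1) * x‖))) :=
    fun p => ((Real.hasSum_pow_div_factorial _).mul_left _).mul_left _
  have hrow : ∀ p, Summable fun n => ‖abelDoubleSeries f lam x (p, n)‖ := fun p =>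
    (hbound p).summable.of_nonneg_of_le (fun _ => norm_nonneg _) (hterm p)
  refine (summable_prod_of_nonneg fun _ => norm_nonneg _).mpr ⟨hrow, ?_⟩
  refine (summable_inv_succ_mul_sqrt.mul_left (C * ‖lam‖ * Real.exp ‖lam‖)).of_nonneg_of_le
    (fun _ => tsum_nonneg fun _ => norm_nonneg _) fun p => ?_
  calc ∑' n, ‖abelDoubleSeries f lam x (p, n)‖ ≤ ∑' n, bound p n :=
        (hrow p).tsum_le_tsum (hterm p) (hbound p).summable
    _ = _ := (hbound p).tsum_eq
    _ ≤ _ := norm_abelCoeff_mul_le hC hK hx p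

theorem stmt6_general (f : ℂ → ℂ) (hf : Differentiable ℂ f) (C K : ℝ) (hK : 0 < K)
    (hgrowth : ∀ n : ℕ, ‖iteratedDeriv n f 0‖ ≤ C * K ^ n) :
    ∀ x : ℂ, Real.exp 1 * K * ‖x‖ * Real.exp (K * ‖x‖) ≤ 1 →
      ∀ lam : ℂ,
        Summable (fun p : ℕ =>
          ‖lam * (lam - ((p : ℂ) + 1)) ^ p * (x ^ (p + 1) / ((p + 1)! : ℂ)) *
            iteratedDeriv (p + 1) f (((p : ℂ) + 1) * x)‖) ∧
        HasSum (fun p : ℕ =>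
          lam * (lam - ((p : ℂ) + 1)) ^ p * (x ^ (p + 1) / ((p + 1)! : ℂ)) *
            iteratedDeriv (p + 1) f (((p : ℂ) + 1) * x))
          (f (lam * x) - f 0) := by
  intro x hx lam
  have hrow := hasSum_abelDoubleSeries_row hf lam x
  have hnorm := summable_norm_abelDoubleSeries hK.le hgrowth hx lam
  exact ⟨hnorm.norm_of_hasSum_row hrow, hnorm.of_norm.hasSum_of_hasSum_sum_antidiagonal hrow
    (hasSum_sum_antidiagonal_abelDoubleSeries hf lam x)⟩

theorem stmt6 (f : ℂ → ℂ) (hf : Differentiable ℂ f) (C K : ℝ) (hC : 0 < C) (hK : 0 < K)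
    (hgrowth : ∀ n : ℕ, ‖iteratedDeriv n f 0‖ ≤ C * K ^ n) :
    ∀ x : ℂ, Real.exp 1 * K * ‖x‖ * Real.exp (K * ‖x‖) ≤ 1 →
      ∀ lam : ℂ,
        Summable (fun p : ℕ =>
          ‖lam * (lam - ((p : ℂ) + 1)) ^ p * (x ^ (p + 1) / ((p + 1)! : ℂ)) *
            iteratedDeriv (p + 1) f (((p : ℂ) + 1) * x)‖) ∧
        HasSum (fun p : ℕ =>
          lam * (lam - ((p : ℂ) + 1)) ^ p * (x ^ (p + 1) / ((p + 1)! : ℂ)) *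
            iteratedDeriv (p + 1) f (((p : ℂ) + 1) * x))
          (f (lam * x) - f 0) :=
  stmt6_general f hf C K hK hgrowth
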